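/- arXiv:2309.13493 — 2 statements merged into one kernel-verified Lean document; each statement's English description precedes it below -/
import Mathlib

section
/- For every integer k ≥ 2 there exists a unique real λ > 0 such that h_k(k;λ) = 1, and this unique root r_k satisfies 0 < r_k < 1. -/
/-- Scaled pmf of the Poisson distribution of order `k`:
`h_k(n;λ) = Σ λ^(n₁+⋯+n_k)/(n₁!⋯n_k!)`, summed over all `k`-tuples `(n₁,…,n_k)`
of nonnegative integers with `n₁ + 2n₂ + ⋯ + k·n_k = n`.
(Each `n_i` is at most `n` whenever the constraint holds, so the range is exhaustive.) -/
noncomputable def poissonOrderH (k n : ℕ) (lam : ℝ) : ℝ :=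
  ∑ t ∈ (Fintype.piFinset fun _ : Fin k => Finset.range (n + 1)) |>.filter
      (fun t => ∑ i : Fin k, ((i : ℕ) + 1) * t i = n),
    lam ^ (∑ i : Fin k, t i) / ∏ i : Fin k, (Nat.factorial (t i) : ℝ)

/-- Pmf of the Poisson distribution of order `k`: `f_k(n;λ) = e^{-kλ} h_k(n;λ)`. -/
noncomputable def poissonOrderPmf (k n : ℕ) (lam : ℝ) : ℝ :=
  Real.exp (-(k * lam)) * poissonOrderH k n lam

/-!
`λ ↦ h_k(k;λ)` is a polynomial in `λ` with nonnegative coefficients and no constant term, so it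
vanishes at `0` and is continuous and strictly increasing on `[0, ∞)`. Its monomials include `λ`
(from `n_k = 1`) and `λ^k/k!` (from `n_1 = k`), so its value at `1` is at least `1 + 1/k! > 1`.
The intermediate value theorem gives a root of `h_k(k;λ) = 1` in `(0, 1)`, and strict
monotonicity makes it the only positive one.
-/

open Finset

namespace PoissonOrder

variable {k n : ℕ}

def tuples (k n : ℕ) : Finset (Fin k → ℕ) :=
  (Fintype.piFinset fun _ : Fin k => range (n + 1)).filter
    fun t => ∑ i : Fin k, ((i : ℕ) + 1) * t i = n

noncomputable def term (lam : ℝ) (t : Fin k → ℕ) : ℝ :=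
  lam ^ (∑ i, t i) / ∏ i, ((t i).factorial : ℝ)

theorem poissonOrderH_eq_sum_term (lam : ℝ) :
    poissonOrderH k n lam = ∑ t ∈ tuples k n, term lam t :=
  rfl

theorem mem_tuples {t : Fin k → ℕ} : t ∈ tuples k n ↔ ∑ i : Fin k, ((i : ℕ) + 1) * t i = n := by
  refine ⟨fun ht => (mem_filter.mp ht).2, fun ht => mem_filter.mpr ⟨?_, ht⟩⟩
  refine Fintype.mem_piFinset.mpr fun i => mem_range.mpr (Nat.lt_succ_of_le ?_)
  calc t i ≤ ((i : ℕ) + 1) * t i := Nat.le_mul_of_pos_left _ (Nat.succ_pos _)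
    _ ≤ ∑ j : Fin k, ((j : ℕ) + 1) * t j :=
        single_le_sum (f := fun j : Fin k => ((j : ℕ) + 1) * t j) (by simp) (mem_univ i)
    _ = n := ht

theorem single_mem_tuples (i : Fin k) {m : ℕ} (h : ((i : ℕ) + 1) * m = n) :
    Pi.single i m ∈ tuples k n := by
  rw [mem_tuples, ← h, Fintype.sum_eq_single i fun j hj => by simp [hj],
    Pi.single_eq_same]

theorem term_single (lam : ℝ) (i : Fin k) (m : ℕ) :
    term lam (Pi.single i m) = lam ^ m / m.factorial := by
  rw [term, sum_pi_single', if_pos (mem_univ i),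
    Fintype.prod_eq_single i fun j hj => by simp [hj], Pi.single_eq_same]

theorem term_nonneg {lam : ℝ} (hlam : 0 ≤ lam) (t : Fin k → ℕ) : 0 ≤ term lam t := by
  unfold term
  positivity

theorem term_mono {a b : ℝ} (ha : 0 ≤ a) (hab : a ≤ b) (t : Fin k → ℕ) : term a t ≤ term b t := by
  unfold term
  gcongr

theorem term_zero {t : Fin k → ℕ} (ht : t ∈ tuples k n) (hn : n ≠ 0) : term 0 t = 0 := by
  have hsum : ∑ i, t i ≠ 0 := by
    intro h0
    rw [sum_eq_zero_iff] at h0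
    apply hn
    rw [← mem_tuples.mp ht]
    exact sum_eq_zero fun i hi => by rw [h0 i hi, mul_zero]
  rw [term, zero_pow hsum, zero_div]

end PoissonOrder

open PoissonOrder

theorem continuous_poissonOrderH (k n : ℕ) : Continuous (poissonOrderH k n) := by
  simp_rw [funext poissonOrderH_eq_sum_term, term]
  fun_prop

theorem poissonOrderH_zero {k n : ℕ} (hn : n ≠ 0) : poissonOrderH k n 0 = 0 :=
  sum_eq_zero fun _ ht => term_zero ht hn

/-- The monomial `λ^n/n!` (from `n_1 = n`) already makes `h_k(n;·)` strictly increasing. -/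
theorem strictMonoOn_poissonOrderH {k n : ℕ} (hk : k ≠ 0) (hn : n ≠ 0) :
    StrictMonoOn (poissonOrderH k n) (Set.Ici 0) := by
  intro a ha b _ hab
  let i₀ : Fin k := ⟨0, Nat.pos_of_ne_zero hk⟩
  rw [poissonOrderH_eq_sum_term, poissonOrderH_eq_sum_term]
  refine sum_lt_sum (fun t _ => term_mono ha hab.le t)
    ⟨Pi.single i₀ n, single_mem_tuples i₀ (by simp [i₀]), ?_⟩
  rw [term_single, term_single]
  gcongr

theorem one_lt_poissonOrderH_self_one {k : ℕ} (hk : 2 ≤ k) : 1 < poissonOrderH k k 1 := by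
  let first : Fin k := ⟨0, by omega⟩
  let last : Fin k := ⟨k - 1, by omega⟩
  have hne : (Pi.single last 1 : Fin k → ℕ) ≠ Pi.single first k := fun h => by
    have := congrFun h last
    simp [first, last, Fin.ext_iff, show k - 1 ≠ 0 by omega] at this
  have hpair : {Pi.single last 1, Pi.single first k} ⊆ tuples k k := by
    refine insert_subset (single_mem_tuples last ?_) (singleton_subset_iff.mpr ?_)
    · simp only [last]; omega
    · exact single_mem_tuples first (by simp [first])
  calc (1 : ℝ) < 1 + 1 / k.factorial := lt_add_of_pos_right _ (by positivity)
    _ = ∑ t ∈ {Pi.single last 1, Pi.single first k}, term 1 t := by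
        rw [sum_pair hne, term_single, term_single]; simp
    _ ≤ poissonOrderH k k 1 :=
        sum_le_sum_of_subset_of_nonneg hpair fun t _ _ => term_nonneg zero_le_one t

theorem stmt_3 (k : ℕ) (hk : 2 ≤ k) :
    ∃ r : ℝ, (0 < r ∧ r < 1 ∧ poissonOrderH k k r = 1) ∧
      ∀ lam : ℝ, 0 < lam → poissonOrderH k k lam = 1 → lam = r := by
  have hmono := strictMonoOn_poissonOrderH (k := k) (n := k) (by omega) (by omega)
  obtain ⟨r, ⟨hr0, hr1⟩, hr⟩ := intermediate_value_Ioo (zero_le_one' ℝ)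
    (continuous_poissonOrderH k k).continuousOn
    (show (1 : ℝ) ∈ Set.Ioo (poissonOrderH k k 0) (poissonOrderH k k 1) by
      rw [poissonOrderH_zero (n := k) (by omega)]
      exact ⟨zero_lt_one, one_lt_poissonOrderH_self_one hk⟩)
  refine ⟨r, ⟨hr0, hr1, hr⟩, fun lam hlam hlam1 => ?_⟩
  exact hmono.injOn (Set.mem_Ici.mpr hlam.le) (Set.mem_Ici.mpr hr0.le) (hlam1.trans hr.symm)
end

section
/- For every integer k ≥ 2 and every real λ with 0 < λ < 2/(k+1), the Poisson distribution of order k with parameter λ has unique mode 0; that is, f_k(n;λ) < f_k(0;λ) for every integer n ≥ 1. -/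
open Finset Function Nat

@[to_additive]
theorem Fintype.prod_apply_update_mul {ι α M : Type*} [Fintype ι] [DecidableEq ι] [CommMonoid M]
    (g : ι → α → M) (t : ι → α) (i : ι) (b : α) :
    (∏ j, g j (update t i b j)) * g i (t i) = (∏ j, g j (t j)) * g i b := by
  simp only [apply_update g t i b]
  rw [prod_update_of_mem (mem_univ i), Fintype.prod_eq_mul_prod_compl i (fun j => g j (t j)),
    ← compl_eq_univ_sdiff]
  ac_rfl

theorem Finset.sum_range_ite_succ_mul_two (k n : ℕ) :
    (∑ i ∈ range k, if i + 1 ≤ n then i + 1 else 0) * 2 = min k n * (min k n + 1) := by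
  induction k with
  | zero => simp
  | succ k ih =>
    rw [sum_range_succ, add_mul, ih]
    split_ifs with h
    · rw [min_eq_left h, min_eq_left (by omega)]
      ring
    · rw [min_eq_right (by omega), min_eq_right (by omega), zero_mul, add_zero]

theorem Finset.sum_range_ite_succ_mul_two_le (k n : ℕ) :
    (∑ i ∈ range k, if i + 1 ≤ n then i + 1 else 0) * 2 ≤ n * (k + 1) := by
  rw [sum_range_ite_succ_mul_two]
  exact Nat.mul_le_mul (min_le_right k n) (Nat.succ_le_succ (min_le_left k n))

namespace PoissonOrder

variable {k : ℕ}

-- The index `i : Fin k` stands for the part size `i + 1`.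
def weightedSize (t : Fin k → ℕ) : ℕ := ∑ i : Fin k, ((i : ℕ) + 1) * t i

noncomputable def weight (lam : ℝ) (t : Fin k → ℕ) : ℝ :=
  lam ^ (∑ i : Fin k, t i) / ∏ i : Fin k, ((t i)! : ℝ)

def level (k n : ℕ) : Finset (Fin k → ℕ) :=
  (Fintype.piFinset fun _ : Fin k => range (n + 1)).filter (fun t => weightedSize t = n)

theorem poissonOrderH_eq_sum_level (k n : ℕ) (lam : ℝ) :
    poissonOrderH k n lam = ∑ t ∈ level k n, weight lam t := rfl

theorem mul_apply_le_weightedSize (t : Fin k → ℕ) (i : Fin k) :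
    ((i : ℕ) + 1) * t i ≤ weightedSize t :=
  single_le_sum (f := fun j : Fin k => ((j : ℕ) + 1) * t j) (fun _ _ => zero_le _) (mem_univ i)

theorem mem_level {n : ℕ} {t : Fin k → ℕ} : t ∈ level k n ↔ weightedSize t = n := by
  simp only [level, mem_filter, Fintype.mem_piFinset, mem_range, and_iff_right_iff_imp]
  rintro rfl i
  have := mul_apply_le_weightedSize t i
  nlinarith

theorem weightedSize_update_add (t : Fin k → ℕ) (i : Fin k) (b : ℕ) :
    weightedSize (update t i b) + ((i : ℕ) + 1) * t i = weightedSize t + ((i : ℕ) + 1) * b :=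
  Fintype.sum_apply_update_add (fun (j : Fin k) m => ((j : ℕ) + 1) * m) t i b

theorem succ_mul_weight_update_succ (lam : ℝ) (u : Fin k → ℕ) (i : Fin k) :
    ((u i : ℝ) + 1) * weight lam (update u i (u i + 1)) = lam * weight lam u := by
  have hsum : ∑ j, update u i (u i + 1) j = ∑ j, u j + 1 := by
    have := Fintype.sum_apply_update_add (fun _ m => m) u i (u i + 1)
    omega
  have hprod : ∏ j, ((update u i (u i + 1) j)! : ℝ) = ((u i : ℝ) + 1) * ∏ j, ((u j)! : ℝ) := by
    have := Fintype.prod_apply_update_mul (fun _ m => (m ! : ℝ)) u i (u i + 1)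
    simp only [factorial_succ, cast_mul, cast_succ] at this
    have hpos : ((u i)! : ℝ) ≠ 0 := by positivity
    exact mul_right_cancel₀ hpos (by rw [this]; ring)
  rw [weight, weight, hsum, hprod, pow_succ]
  field_simp

theorem sum_filter_level_apply_ne_zero {M : Type*} [AddCommMonoid M] {n : ℕ} {i : Fin k}
    (hi : (i : ℕ) + 1 ≤ n) (f : (Fin k → ℕ) → M) :
    ∑ t ∈ (level k n).filter (fun t => t i ≠ 0), f t =
      ∑ u ∈ level k (n - ((i : ℕ) + 1)), f (update u i (u i + 1)) := by
  refine sum_nbij' (fun t => update t i (t i - 1)) (fun u => update u i (u i + 1))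
    (fun t ht => ?_) (fun u hu => ?_) (fun t ht => ?_) (fun u _ => by simp) (fun t ht => ?_)
  all_goals simp only [mem_filter, mem_level] at *
  · have := weightedSize_update_add t i (t i - 1)
    have : ((i : ℕ) + 1) * (t i - 1) + ((i : ℕ) + 1) = ((i : ℕ) + 1) * t i := by
      rw [← Nat.mul_succ, Nat.succ_eq_add_one, Nat.sub_add_cancel (by omega)]
    omega
  · have := weightedSize_update_add u i (u i + 1)
    rw [mul_add] at this
    simp only [update_self]
    omega
  · simp [Nat.sub_add_cancel (Nat.one_le_iff_ne_zero.2 ht.2)]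
  · simp [Nat.sub_add_cancel (Nat.one_le_iff_ne_zero.2 ht.2)]

theorem sum_level_apply_mul_weight (n : ℕ) (lam : ℝ) (i : Fin k) :
    ∑ t ∈ level k n, (t i : ℝ) * weight lam t =
      if (i : ℕ) + 1 ≤ n then lam * poissonOrderH k (n - ((i : ℕ) + 1)) lam else 0 := by
  rw [← sum_filter_of_ne (p := fun t => t i ≠ 0) fun t _ h h0 => by simp [h0] at h]
  split_ifs with hi
  · rw [sum_filter_level_apply_ne_zero hi, poissonOrderH_eq_sum_level, mul_sum]
    refine sum_congr rfl fun u _ => ?_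
    rw [update_self, cast_succ]
    exact succ_mul_weight_update_succ lam u i
  · refine sum_eq_zero fun t ht => absurd ?_ hi
    rw [mem_filter, mem_level] at ht
    have := mul_apply_le_weightedSize t i
    nlinarith [Nat.one_le_iff_ne_zero.2 ht.2]

theorem cast_mul_poissonOrderH (n : ℕ) (lam : ℝ) :
    (n : ℝ) * poissonOrderH k n lam = ∑ i : Fin k, (((i : ℕ) : ℝ) + 1) *
      if (i : ℕ) + 1 ≤ n then lam * poissonOrderH k (n - ((i : ℕ) + 1)) lam else 0 := by
  simp only [← sum_level_apply_mul_weight, mul_sum]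
  rw [sum_comm, poissonOrderH_eq_sum_level, mul_sum]
  refine sum_congr rfl fun t ht => ?_
  rw [← (mem_level.1 ht)]
  simp only [weightedSize, cast_sum, cast_mul, cast_add, cast_one, sum_mul, mul_assoc]

theorem poissonOrderH_lt_one_of_forall_lt_le_one {lam : ℝ} (hlam : 0 ≤ lam)
    (hlam2 : lam < 2 / ((k : ℝ) + 1)) {n : ℕ} (hn : 1 ≤ n)
    (ih : ∀ m < n, poissonOrderH k m lam ≤ 1) : poissonOrderH k n lam < 1 := by
  set G := ∑ i : Fin k, if (i : ℕ) + 1 ≤ n then ((i : ℕ) : ℝ) + 1 else 0 with hGdef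
  have hG : G * 2 ≤ n * (k + 1) := by
    have := sum_range_ite_succ_mul_two_le k n
    rw [hGdef, Fin.sum_univ_eq_sum_range (fun i => if i + 1 ≤ n then (i : ℝ) + 1 else 0)]
    exact_mod_cast this
  have hterm : ∀ i : Fin k, (((i : ℕ) : ℝ) + 1) *
      (if (i : ℕ) + 1 ≤ n then lam * poissonOrderH k (n - ((i : ℕ) + 1)) lam else 0) ≤
      lam * if (i : ℕ) + 1 ≤ n then ((i : ℕ) : ℝ) + 1 else 0 := by
    intro i
    split_ifs with hi
    · have := ih (n - ((i : ℕ) + 1)) (by omega)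
      have : 0 ≤ lam * (((i : ℕ) : ℝ) + 1) := by positivity
      nlinarith
    · simp
  have hlamk : lam * (k + 1) < 2 := by rwa [lt_div_iff₀ (by positivity)] at hlam2
  have hn' : (1 : ℝ) ≤ n := by exact_mod_cast hn
  have : (n : ℝ) * poissonOrderH k n lam < n * 1 := calc
    (n : ℝ) * poissonOrderH k n lam ≤ lam * G := by
      rw [cast_mul_poissonOrderH, mul_sum]
      exact sum_le_sum fun i _ => hterm i
    _ < n * 1 := by nlinarith [mul_le_mul_of_nonneg_left hG hlam]
  exact lt_of_mul_lt_mul_left this (n.cast_nonneg)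

theorem poissonOrderH_zero (k : ℕ) (lam : ℝ) : poissonOrderH k 0 lam = 1 := by
  have : level k 0 = {0} := by
    ext t
    simp only [mem_level, mem_singleton, weightedSize, sum_eq_zero_iff, mem_univ, true_implies,
      mul_eq_zero, add_eq_zero, one_ne_zero, and_false, false_or, funext_iff, Pi.zero_apply]
  simp [poissonOrderH_eq_sum_level, this, weight]

theorem poissonOrderH_le_one {lam : ℝ} (hlam : 0 ≤ lam) (hlam2 : lam < 2 / ((k : ℝ) + 1))
    (n : ℕ) : poissonOrderH k n lam ≤ 1 := by
  induction n using Nat.strong_induction_on with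
  | _ n ih =>
    rcases Nat.eq_zero_or_pos n with rfl | hn
    · exact (poissonOrderH_zero k lam).le
    · exact (poissonOrderH_lt_one_of_forall_lt_le_one hlam hlam2 hn ih).le

end PoissonOrder

theorem stmt_8_general (k : ℕ) (lam : ℝ) (hlam : 0 < lam)
    (hlam2 : lam < 2 / ((k : ℝ) + 1)) :
    ∀ n : ℕ, 1 ≤ n → poissonOrderPmf k n lam < poissonOrderPmf k 0 lam := by
  intro n hn
  have hlt := PoissonOrder.poissonOrderH_lt_one_of_forall_lt_le_one hlam.le hlam2 hn
    fun m _ => PoissonOrder.poissonOrderH_le_one hlam.le hlam2 m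
  rw [poissonOrderPmf, poissonOrderPmf, PoissonOrder.poissonOrderH_zero]
  exact mul_lt_mul_of_pos_left hlt (Real.exp_pos _)

theorem stmt_8 (k : ℕ) (hk : 2 ≤ k) (lam : ℝ) (hlam : 0 < lam)
    (hlam2 : lam < 2 / ((k : ℝ) + 1)) :
    ∀ n : ℕ, 1 ≤ n → poissonOrderPmf k n lam < poissonOrderPmf k 0 lam :=
  stmt_8_general k lam hlam hlam2
end
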